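/- arXiv:1101.1007 — 4 statements merged into one kernel-verified Lean document; each statement's English description precedes it below -/
import Mathlib

section
/- Let [q; w₁, …, w_n] be a weighted voting game with quota q > 0 and 0 ≤ w_i ≤ q for all i. Suppose there is a partition of N into coalitions C₁, …, C_c such that C₁, …, C_{c−1} are winning and each winning coalition C_j (j ≤ c−1) has total weight strictly less than 2q, while C_c has total weight strictly less than q. Then every partition π of N contains at most 2(c−1) winning coalitions. In particular, such a partition is a 2-approximation to the optimal social welfare. -/
/-! Every winning coalition weighs at least `q`, and the coalitions of a partition are disjoint,
so a partition with `k` winning coalitions has total weight at least `k q`. The given partition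
shows that the total weight is below `2q(c-1) + q`, hence `k ≤ 2(c-1)`. -/

open Finset

section WinningCoalitions

variable {α : Type*} [Fintype α] {w : α → ℝ} {q : ℝ}

theorem card_filter_le_sum_mul_le_sum (π : Finset (Finset α))
    (hπ : (π : Set (Finset α)).PairwiseDisjoint id) (hw : ∀ k, 0 ≤ w k) :
    (#{B ∈ π | q ≤ ∑ k ∈ B, w k} : ℝ) * q ≤ ∑ k, w k := by
  classical
  set S := {B ∈ π | q ≤ ∑ k ∈ B, w k}
  have hS : (S : Set (Finset α)).PairwiseDisjoint id :=
    hπ.subset (coe_subset.mpr (filter_subset _ _))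
  calc (#S : ℝ) * q = ∑ _B ∈ S, q := by rw [sum_const, nsmul_eq_mul]
    _ ≤ ∑ B ∈ S, ∑ k ∈ B, w k := sum_le_sum fun B hB => (mem_filter.mp hB).2
    _ = ∑ k ∈ S.biUnion id, w k := (sum_biUnion hS).symm
    _ ≤ ∑ k, w k := sum_le_sum_of_subset_of_nonneg (subset_univ _) fun k _ _ => hw k

theorem card_filter_le_sum_le_of_sum_lt (π : Finset (Finset α))
    (hπ : (π : Set (Finset α)).PairwiseDisjoint id) (hw : ∀ k, 0 ≤ w k) (hq : 0 < q)
    {N : ℕ} (htotal : ∑ k, w k < (N + 1) * q) :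
    #{B ∈ π | q ≤ ∑ k ∈ B, w k} ≤ N := by
  have h := (card_filter_le_sum_mul_le_sum (q := q) π hπ hw).trans_lt htotal
  exact Nat.lt_succ_iff.mp (by exact_mod_cast lt_of_mul_lt_mul_right h hq.le)

end WinningCoalitions

theorem Fin.sum_lt_mul_add_of_castSucc_le_of_last_lt {m : ℕ} {f : Fin (m + 1) → ℝ} {a b : ℝ}
    (hinit : ∀ i : Fin m, f i.castSucc ≤ a) (hlast : f (Fin.last m) < b) :
    ∑ i, f i < m * a + b := by
  have hsum : ∑ i : Fin m, f i.castSucc ≤ m * a := by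
    simpa using sum_le_card_nsmul univ _ a fun i _ => hinit i
  rw [Fin.sum_univ_castSucc]
  linarith

/-- The greedy partition for WVGs is a 2-approximation: if `C₀,…,C_{c-1}`
partition the players with the first `c-1` blocks winning and of weight `< 2q`
and the last block of weight `< q`, then every partition has at most `2(c-1)`
winning coalitions. -/
theorem stmt_6 (n c : ℕ) (hc : 0 < c) (q : ℝ) (hq : 0 < q)
    (w : Fin n → ℝ) (hw : ∀ i, 0 ≤ w i ∧ w i ≤ q)
    (C : Fin c → Finset (Fin n))
    (hCdisj : ∀ i j : Fin c, i ≠ j → Disjoint (C i) (C j))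
    (hCcover : Finset.univ.biUnion C = Finset.univ)
    (hwin : ∀ i : Fin c, (i : ℕ) < c - 1 →
      q ≤ ∑ k ∈ C i, w k ∧ ∑ k ∈ C i, w k < 2 * q)
    (hlast : ∀ i : Fin c, (i : ℕ) = c - 1 → ∑ k ∈ C i, w k < q) :
    ∀ π : Finset (Finset (Fin n)),
      (∀ A ∈ π, ∀ B ∈ π, A ≠ B → Disjoint A B) →
      π.sup id = Finset.univ →
      (π.filter (fun B => q ≤ ∑ k ∈ B, w k)).card ≤ 2 * (c - 1) := by
  obtain ⟨m, rfl⟩ := Nat.exists_eq_add_one_of_ne_zero hc.ne'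
  intro π hdisj _
  simp only [Nat.add_sub_cancel] at hwin hlast ⊢
  have htotal : ∑ k, w k = ∑ i, ∑ k ∈ C i, w k := by
    rw [← sum_biUnion fun i _ j _ hij => hCdisj i j hij, hCcover]
  have hbound : ∑ i, ∑ k ∈ C i, w k < m * (2 * q) + q :=
    Fin.sum_lt_mul_add_of_castSucc_le_of_last_lt
      (fun i => (hwin i.castSucc i.castSucc_lt_last).2.le) (hlast (Fin.last m) rfl)
  refine card_filter_le_sum_le_of_sum_lt π (fun A hA B hB => hdisj A hA B hB)
    (fun k => (hw k).1) hq ?_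
  push_cast
  linarith
end

section
/- Define f on tuples (a₁, …, a_k) of natural numbers with a_r ≤ |T_r| by: f(0,…,0) = 0 and f(a) = max over nonzero tuples b with b_r ≤ a_r of f(a − b) + V(b), where V(b) is the common value of any coalition of type b. Then f(|T₁|, …, |T_k|) equals the maximum social welfare ∑_{C ∈ π} v(C) over all partitions π of N, for any coalitional game (N,v) with valid type-partition {T₁, …, T_k} and v(∅)=0. -/
/-!
By strong induction on a set `S` of players, `f` evaluated at the type of `S` is the maximal welfare
of a coalition structure on `S`. Any coalition structure on a nonempty `S` splits as a block `C`
together with a coalition structure on `S \ C`, whose type is the difference of the types; since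
the classes `T r` are disjoint, every type `b` below the type of `S` is the type of some `C ⊆ S`,
so the choices of `b` in the recursion are exactly the choices of a first block.
-/

open Finset

section CoalitionStructure

variable {α ι : Type*} [DecidableEq α]

def coalitionType (T : ι → Finset α) (C : Finset α) : ι → ℕ := fun r => #(C ∩ T r)

def IsCoalitionStructure (S : Finset α) (π : Finset (Finset α)) : Prop :=
  (∀ C ∈ π, ∀ D ∈ π, C ≠ D → Disjoint C D) ∧ π.sup id = S ∧ ∅ ∉ π

namespace IsCoalitionStructure

variable {S C : Finset α} {π : Finset (Finset α)}

lemma empty : IsCoalitionStructure (∅ : Finset α) ∅ := by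
  simp [IsCoalitionStructure]

lemma subset (h : IsCoalitionStructure S π) (hC : C ∈ π) : C ⊆ S :=
  h.2.1 ▸ le_sup (f := id) hC

lemma nonempty (h : IsCoalitionStructure S π) (hC : C ∈ π) : C.Nonempty :=
  nonempty_iff_ne_empty.2 fun hC' => h.2.2 (hC' ▸ hC)

lemma notMem_of_sdiff (h : IsCoalitionStructure (S \ C) π) (hC : C.Nonempty) : C ∉ π := by
  intro hCπ
  obtain ⟨x, hx⟩ := hC
  exact (mem_sdiff.1 (h.subset hCπ hx)).2 hx

lemma insert (h : IsCoalitionStructure (S \ C) π) (hCS : C ⊆ S) (hC : C.Nonempty) :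
    IsCoalitionStructure S (insert C π) := by
  have hCdisj : ∀ D ∈ π, Disjoint C D := fun D hD =>
    disjoint_of_subset_right (h.subset hD) disjoint_sdiff
  refine ⟨?_, ?_, ?_⟩
  · intro X hX D hD hXD
    rw [mem_insert] at hX hD
    rcases hX with hXC | hX <;> rcases hD with hDC | hD
    · exact absurd (hXC.trans hDC.symm) hXD
    · exact hXC ▸ hCdisj D hD
    · exact hDC ▸ (hCdisj X hX).symm
    · exact h.1 X hX D hD hXD
  · rw [sup_insert, h.2.1]
    exact union_sdiff_of_subset hCS
  · rw [mem_insert, not_or]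
    exact ⟨hC.ne_empty.symm, h.2.2⟩

lemma erase (h : IsCoalitionStructure S π) (hC : C ∈ π) :
    IsCoalitionStructure (S \ C) (π.erase C) := by
  refine ⟨fun X hX D hD => h.1 X (mem_of_mem_erase hX) D (mem_of_mem_erase hD), ?_,
    fun h' => h.2.2 (mem_of_mem_erase h')⟩
  ext x
  simp only [mem_sup, mem_erase, id, mem_sdiff, ← h.2.1]
  constructor
  · rintro ⟨D, ⟨hDC, hD⟩, hxD⟩
    exact ⟨⟨D, hD, hxD⟩, disjoint_left.1 (h.1 D hD C hC hDC) hxD⟩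
  · rintro ⟨⟨D, hD, hxD⟩, hxC⟩
    exact ⟨D, ⟨fun hDC => hxC (hDC ▸ hxD), hD⟩, hxD⟩

end IsCoalitionStructure

section coalitionType

variable (T : ι → Finset α) {S C : Finset α}

lemma coalitionType_empty : coalitionType T ∅ = 0 := by
  funext r
  simp [coalitionType]

lemma coalitionType_univ [Fintype α] : coalitionType T univ = fun r => #(T r) := by
  funext r
  simp [coalitionType]

lemma coalitionType_le_card (r : ι) : coalitionType T S r ≤ #(T r) :=
  card_le_card inter_subset_right

lemma coalitionType_mono (h : C ⊆ S) : coalitionType T C ≤ coalitionType T S := fun _ =>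
  card_le_card (inter_subset_inter_right h)

lemma coalitionType_sdiff (h : C ⊆ S) :
    coalitionType T (S \ C) = coalitionType T S - coalitionType T C := by
  funext r
  simp only [coalitionType, Pi.sub_apply]
  rw [show S \ C ∩ T r = (S ∩ T r) \ (C ∩ T r) from inf_sdiff_distrib_right ..,
    card_sdiff_of_subset (inter_subset_inter_right h)]

variable {T}

lemma coalitionType_ne_zero (hcover : ∀ x, ∃ r, x ∈ T r) (hC : C.Nonempty) :
    coalitionType T C ≠ 0 := by
  obtain ⟨x, hx⟩ := hC
  obtain ⟨r, hr⟩ := hcover x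
  intro h
  have : #(C ∩ T r) = 0 := congrFun h r
  exact (card_ne_zero.2 ⟨x, mem_inter.2 ⟨hx, hr⟩⟩) this

lemma exists_subset_coalitionType_eq [Fintype ι] (hT : Pairwise (Function.onFun Disjoint T))
    {b : ι → ℕ} (hb : b ≤ coalitionType T S) : ∃ C ⊆ S, coalitionType T C = b := by
  choose c hcS hcard using fun r => exists_subset_card_eq (hb r)
  have hcT : ∀ r, c r ⊆ T r := fun r => (hcS r).trans inter_subset_right
  refine ⟨univ.biUnion c, fun x hx => ?_, funext fun r => ?_⟩
  · obtain ⟨s, -, hxs⟩ := mem_biUnion.1 hx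
    exact (mem_inter.1 (hcS s hxs)).1
  · suffices univ.biUnion c ∩ T r = c r from (congrArg card this).trans (hcard r)
    ext x
    simp only [mem_inter, mem_biUnion, mem_univ, true_and]
    refine ⟨fun ⟨⟨s, hxs⟩, hxr⟩ => ?_, fun hx => ⟨⟨r, hx⟩, hcT r hx⟩⟩
    obtain rfl | hsr := eq_or_ne s r
    · exact hxs
    · exact absurd hxr (disjoint_left.1 (hT hsr) (hcT s hxs))

end coalitionType

section DynamicProgram

variable {v : Finset α → ℝ} {T : ι → Finset α} {Vt : (ι → ℕ) → ℝ} {f : (ι → ℕ) → ℝ}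

theorem sum_le_of_isCoalitionStructure (hcover : ∀ x, ∃ r, x ∈ T r)
    (hVt : ∀ C, Vt (coalitionType T C) = v C) (hf0 : f 0 = 0)
    (hfrec : ∀ a : ι → ℕ, (∀ r, a r ≤ #(T r)) → a ≠ 0 →
      IsGreatest {x : ℝ | ∃ b : ι → ℕ, b ≠ 0 ∧ (∀ r, b r ≤ a r) ∧
        x = f (a - b) + Vt b} (f a))
    {S : Finset α} {π : Finset (Finset α)} (hπ : IsCoalitionStructure S π) :
    ∑ C ∈ π, v C ≤ f (coalitionType T S) := by
  induction S using strongInduction generalizing π with | H S ih => ?_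
  obtain rfl | ⟨C, hC⟩ := π.eq_empty_or_nonempty
  · have hS : S = ∅ := by simpa [IsCoalitionStructure] using hπ.2.1.symm
    simp [hS, coalitionType_empty, hf0]
  have hCS := hπ.subset hC
  have hCne := hπ.nonempty hC
  have hrest := ih (S \ C) (sdiff_ssubset hCS hCne) (hπ.erase hC)
  rw [coalitionType_sdiff T hCS] at hrest
  have hstep := (hfrec _ (coalitionType_le_card T) (coalitionType_ne_zero hcover
    (hCne.mono hCS))).2 ⟨coalitionType T C, coalitionType_ne_zero hcover hCne,
      coalitionType_mono T hCS, rfl⟩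
  calc ∑ D ∈ π, v D = ∑ D ∈ π.erase C, v D + Vt (coalitionType T C) := by
        rw [hVt, add_comm, add_sum_erase π v hC]
    _ ≤ f (coalitionType T S) := (add_le_add_left hrest _).trans hstep

theorem exists_isCoalitionStructure_sum_eq [Fintype ι] (hT : Pairwise (Function.onFun Disjoint T))
    (hcover : ∀ x, ∃ r, x ∈ T r)
    (hVt : ∀ C, Vt (coalitionType T C) = v C) (hf0 : f 0 = 0)
    (hfrec : ∀ a : ι → ℕ, (∀ r, a r ≤ #(T r)) → a ≠ 0 →
      IsGreatest {x : ℝ | ∃ b : ι → ℕ, b ≠ 0 ∧ (∀ r, b r ≤ a r) ∧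
        x = f (a - b) + Vt b} (f a))
    (S : Finset α) : ∃ π, IsCoalitionStructure S π ∧ ∑ C ∈ π, v C = f (coalitionType T S) := by
  induction S using strongInduction with | H S ih => ?_
  obtain rfl | hS := S.eq_empty_or_nonempty
  · exact ⟨∅, .empty, by simp [coalitionType_empty, hf0]⟩
  obtain ⟨b, hb0, hbS, hfS⟩ :=
    (hfrec _ (coalitionType_le_card T) (coalitionType_ne_zero hcover hS)).1
  obtain ⟨C, hCS, rfl⟩ := exists_subset_coalitionType_eq hT hbS
  have hCne : C.Nonempty := nonempty_iff_ne_empty.2 fun h => hb0 (h ▸ coalitionType_empty T)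
  obtain ⟨π, hπ, hsum⟩ := ih (S \ C) (sdiff_ssubset hCS hCne)
  refine ⟨insert C π, hπ.insert hCS hCne, ?_⟩
  rw [sum_insert (hπ.notMem_of_sdiff hCne), hsum, coalitionType_sdiff T hCS, hfS, hVt, add_comm]

end DynamicProgram

end CoalitionStructure

theorem stmt_12_general {α : Type*} [Fintype α] [DecidableEq α]
    (v : Finset α → ℝ)
    (k : ℕ) (T : Fin k → Finset α)
    (hTdisj : ∀ r s : Fin k, r ≠ s → Disjoint (T r) (T s))
    (hTcover : Finset.univ.biUnion T = Finset.univ)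
    (Vt : (Fin k → ℕ) → ℝ)
    (hVt : ∀ C : Finset α, Vt (fun r => (C ∩ T r).card) = v C)
    (f : (Fin k → ℕ) → ℝ)
    (hf0 : f 0 = 0)
    (hfrec : ∀ a : Fin k → ℕ, (∀ r, a r ≤ (T r).card) → a ≠ 0 →
      IsGreatest {x : ℝ | ∃ b : Fin k → ℕ, b ≠ 0 ∧ (∀ r, b r ≤ a r) ∧
        x = f (a - b) + Vt b} (f a)) :
    IsGreatest {s : ℝ | ∃ π : Finset (Finset α),
      (∀ C ∈ π, ∀ D ∈ π, C ≠ D → Disjoint C D) ∧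
      π.sup id = Finset.univ ∧ (∅ : Finset α) ∉ π ∧
      s = ∑ C ∈ π, v C} (f (fun r => (T r).card)) := by
  have hcover : ∀ x, ∃ r, x ∈ T r := fun x =>
    mem_biUnion.1 (hTcover ▸ mem_univ x) |>.imp fun _ => And.right
  rw [← coalitionType_univ T]
  obtain ⟨π, hπ, hsum⟩ :=
    exists_isCoalitionStructure_sum_eq (fun _ _ => hTdisj _ _) hcover hVt hf0 hfrec univ
  refine ⟨⟨π, hπ.1, hπ.2.1, hπ.2.2, hsum.symm⟩, ?_⟩
  rintro s ⟨π, hdisj, hsup, hne, rfl⟩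
  exact sum_le_of_isCoalitionStructure hcover hVt hf0 hfrec ⟨hdisj, hsup, hne⟩

/-- Correctness of the dynamic program: the recursively defined `f`, evaluated
at the full type vector `(|T₁|,…,|T_k|)`, equals the maximum social welfare
over all coalition structures. -/
theorem stmt_12 {α : Type*} [Fintype α] [DecidableEq α]
    (v : Finset α → ℝ) (h0 : v ∅ = 0)
    (k : ℕ) (T : Fin k → Finset α)
    (hTdisj : ∀ r s : Fin k, r ≠ s → Disjoint (T r) (T s))
    (hTcover : Finset.univ.biUnion T = Finset.univ)
    (htype : ∀ r : Fin k, ∀ i ∈ T r, ∀ j ∈ T r, ∀ C : Finset α,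
      i ∉ C → j ∉ C → v (insert i C) = v (insert j C))
    (Vt : (Fin k → ℕ) → ℝ)
    (hVt : ∀ C : Finset α, Vt (fun r => (C ∩ T r).card) = v C)
    (f : (Fin k → ℕ) → ℝ)
    (hf0 : f 0 = 0)
    (hfrec : ∀ a : Fin k → ℕ, (∀ r, a r ≤ (T r).card) → a ≠ 0 →
      IsGreatest {x : ℝ | ∃ b : Fin k → ℕ, b ≠ 0 ∧ (∀ r, b r ≤ a r) ∧
        x = f (a - b) + Vt b} (f a)) :
    IsGreatest {s : ℝ | ∃ π : Finset (Finset α),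
      (∀ C ∈ π, ∀ D ∈ π, C ≠ D → Disjoint C D) ∧
      π.sup id = Finset.univ ∧ (∅ : Finset α) ∉ π ∧
      s = ∑ C ∈ π, v C} (f (fun r => (T r).card)) :=
  stmt_12_general v k T hTdisj hTcover Vt hVt f hf0 hfrec
end

section
/- Let A = {a₁, …, a_n} be positive integers with total sum W divisible by k, and let [q; a₁, …, a_n] be the weighted voting game with quota q = W/k. Then A can be partitioned into k disjoint subsets each of sum W/k if and only if there exists a partition π of the players into coalitions with exactly k winning coalitions (i.e., social welfare k). -/
/-!
Put `q = W / k`, so that `W = k q` and `q > 0`. An equal-sum `k`-partition is itself a coalition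
structure whose `k` blocks all just reach the quota. Conversely, `k` disjoint winning coalitions
together weigh at least `k q = W`, so, the weights being positive, they exhaust all players and
each weighs exactly `q`: they form an equal-sum `k`-partition.
-/

open Finset

theorem injective_of_pairwise_disjoint_of_nonempty {ι α : Type*} {P : ι → Finset α}
    (hdis : ∀ i j, i ≠ j → Disjoint (P i) (P j)) (hne : ∀ i, (P i).Nonempty) :
    Function.Injective P := by
  intro i j hij
  by_contra h
  have := hdis i j h
  rw [hij, disjoint_self, bot_eq_empty] at this
  exact (hne j).ne_empty this

section WeightedVoting

variable {α M : Type*} [Fintype α] [DecidableEq α]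
  [AddCommMonoid M] [LinearOrder M] {a : α → M} {q : M}

theorem Finset.eq_univ_of_sum_univ_le [IsOrderedCancelAddMonoid M] (ha : ∀ i, 0 < a i)
    {s : Finset α} (h : ∑ i, a i ≤ ∑ i ∈ s, a i) : s = univ := by
  by_contra hs
  obtain ⟨i, -, hi⟩ := exists_of_ssubset (ssubset_univ_iff.mpr hs)
  exact h.not_gt <| sum_lt_sum_of_subset (subset_univ s) (mem_univ i) hi (ha i)
    fun j _ _ => (ha j).le

theorem sup_eq_univ_and_sum_eq_of_sum_univ_le [IsOrderedCancelAddMonoid M]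
    {F : Finset (Finset α)} (hF : (F : Set (Finset α)).PairwiseDisjoint id) (ha : ∀ i, 0 < a i)
    (hq : ∀ C ∈ F, q ≤ ∑ i ∈ C, a i) (htot : ∑ i, a i ≤ #F • q) :
    F.sup id = univ ∧ ∀ C ∈ F, ∑ i ∈ C, a i = q := by
  have hunion : ∑ i ∈ F.sup id, a i = ∑ C ∈ F, ∑ i ∈ C, a i := by
    rw [sup_eq_biUnion]; exact sum_biUnion hF
  have hlow : #F • q ≤ ∑ C ∈ F, ∑ i ∈ C, a i := card_nsmul_le_sum _ _ _ hq
  have hup : ∑ i ∈ F.sup id, a i ≤ ∑ i, a i := sum_le_univ_sum_of_nonneg fun i => (ha i).le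
  refine ⟨eq_univ_of_sum_univ_le ha (by rw [hunion]; exact htot.trans hlow), ?_⟩
  have hconst : ∑ _C ∈ F, q = ∑ C ∈ F, ∑ i ∈ C, a i := by
    rw [sum_const]; exact le_antisymm hlow (hunion ▸ hup.trans htot)
  exact fun C hC => ((sum_eq_sum_iff_of_le hq).mp hconst C hC).symm

theorem exists_card_winning_eq_of_equal_partition (hq : 0 < q) {k : ℕ}
    {P : Fin k → Finset α} (hdis : ∀ i j, i ≠ j → Disjoint (P i) (P j))
    (hcov : univ.biUnion P = univ) (hsum : ∀ j, ∑ i ∈ P j, a i = q) :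
    ∃ π : Finset (Finset α), (∀ C ∈ π, ∀ D ∈ π, C ≠ D → Disjoint C D) ∧ π.sup id = univ ∧
      #(π.filter fun C => q ≤ ∑ i ∈ C, a i) = k := by
  have hne : ∀ j, (P j).Nonempty := fun j =>
    nonempty_iff_ne_empty.mpr fun h => hq.ne (by rw [← hsum j, h, sum_empty])
  have hinj := injective_of_pairwise_disjoint_of_nonempty hdis hne
  refine ⟨univ.image P, ?_, by rw [sup_image, Function.id_comp, sup_eq_biUnion, hcov], ?_⟩
  · simp only [mem_image, mem_univ, true_and]
    rintro _ ⟨i, rfl⟩ _ ⟨j, rfl⟩ hij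
    exact hdis i j (ne_of_apply_ne P hij)
  · rw [filter_true_of_mem, card_image_of_injective _ hinj, card_univ, Fintype.card_fin]
    simp only [mem_image, mem_univ, true_and]
    rintro _ ⟨j, rfl⟩
    exact (hsum j).ge

theorem exists_equal_partition_of_card_winning_eq [IsOrderedCancelAddMonoid M]
    (ha : ∀ i, 0 < a i) {k : ℕ} {π : Finset (Finset α)}
    (hdis : ∀ C ∈ π, ∀ D ∈ π, C ≠ D → Disjoint C D)
    (hcard : #(π.filter fun C => q ≤ ∑ i ∈ C, a i) = k) (htot : ∑ i, a i = k • q) :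
    ∃ P : Fin k → Finset α, (∀ i j, i ≠ j → Disjoint (P i) (P j)) ∧
      univ.biUnion P = univ ∧ ∀ j, ∑ i ∈ P j, a i = q := by
  set F := π.filter fun C => q ≤ ∑ i ∈ C, a i
  have hFdis : (F : Set (Finset α)).PairwiseDisjoint id := fun C hC D hD =>
    hdis C (mem_filter.mp hC).1 D (mem_filter.mp hD).1
  obtain ⟨hcov, hsum⟩ := sup_eq_univ_and_sum_eq_of_sum_univ_le hFdis ha
    (fun C hC => (mem_filter.mp hC).2) (hcard ▸ htot.le)
  obtain ⟨P, hP⟩ := Function.Embedding.exists_of_card_eq_finset (s := F)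
    (by rw [Fintype.card_fin, hcard])
  have hPF : ∀ j, P j ∈ F := fun j => hP ▸ mem_map_of_mem P (mem_univ j)
  refine ⟨P, fun i j hij => hFdis (hPF i) (hPF j) (P.injective.ne hij), ?_,
    fun j => hsum _ (hPF j)⟩
  rw [← hcov, ← hP, sup_map, sup_eq_biUnion, Function.Embedding.coeFn_mk, Function.id_comp]

end WeightedVoting

theorem stmt_13_general (n k : ℕ) (hn : 0 < n)
    (a : Fin n → ℤ) (ha : ∀ i, 0 < a i)
    (W : ℤ) (hW : W = ∑ i, a i) (hdvd : (k : ℤ) ∣ W) :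
    (∃ P : Fin k → Finset (Fin n),
      (∀ i j : Fin k, i ≠ j → Disjoint (P i) (P j)) ∧
      Finset.univ.biUnion P = Finset.univ ∧
      ∀ j : Fin k, ∑ i ∈ P j, a i = W / k) ↔
    (∃ π : Finset (Finset (Fin n)),
      (∀ C ∈ π, ∀ D ∈ π, C ≠ D → Disjoint C D) ∧
      π.sup id = Finset.univ ∧
      (π.filter (fun C => W / (k : ℤ) ≤ ∑ i ∈ C, a i)).card = k) := by
  have hWpos : 0 < W := hW ▸ sum_pos (fun i _ => ha i) (univ_nonempty_iff.mpr ⟨⟨0, hn⟩⟩)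
  obtain ⟨q, rfl⟩ := hdvd
  have hk : (0 : ℤ) < k := by
    rcases k.eq_zero_or_pos with rfl | hk
    · simp at hWpos
    · exact_mod_cast hk
  have hq : 0 < q := pos_of_mul_pos_right hWpos hk.le
  rw [Int.mul_ediv_cancel_left _ hk.ne']
  exact ⟨fun ⟨_, hdis, hcov, hsum⟩ => exists_card_winning_eq_of_equal_partition hq hdis hcov hsum,
    fun ⟨π, hdis, _, hcard⟩ => exists_equal_partition_of_card_winning_eq ha hdis hcard
      (by rw [← hW, nsmul_eq_mul])⟩

/-- Reduction from k-Partition: positive integers `a₁,…,a_n` of total sum `W`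
(divisible by `k`) can be split into `k` parts of equal sum iff the weighted
voting game `[W/k; a₁,…,a_n]` has a coalition structure with social welfare
exactly `k`. -/
theorem stmt_13 (n k : ℕ) (hn : 0 < n) (hk : 0 < k)
    (a : Fin n → ℤ) (ha : ∀ i, 0 < a i)
    (W : ℤ) (hW : W = ∑ i, a i) (hdvd : (k : ℤ) ∣ W) :
    (∃ P : Fin k → Finset (Fin n),
      (∀ i j : Fin k, i ≠ j → Disjoint (P i) (P j)) ∧
      Finset.univ.biUnion P = Finset.univ ∧
      ∀ j : Fin k, ∑ i ∈ P j, a i = W / k) ↔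
    (∃ π : Finset (Finset (Fin n)),
      (∀ C ∈ π, ∀ D ∈ π, C ≠ D → Disjoint C D) ∧
      π.sup id = Finset.univ ∧
      (π.filter (fun C => W / (k : ℤ) ≤ ∑ i ∈ C, a i)).card = k) :=
  stmt_13_general n k hn a ha W hW hdvd
end

section
/- Let G = (V ∪ {s,t}, E) be a directed graph, and define the edge path coalitional game (N,v) with N = E and v(C) = 1 iff C contains the edge set of some s–t path (v(C) = 0 otherwise). Then the maximum social welfare over all partitions of E equals the maximum number of pairwise edge-disjoint s–t paths in G. -/
/-
The `m` winning blocks of a partition of `E` are themselves `m` edge-disjoint sets of edges each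
containing an s–t path. Conversely, `m` edge-disjoint s–t paths, completed by the block of all
remaining edges, form a partition of `E` with at least `m` winning blocks; these blocks are
distinct because an s–t path with `s ≠ t` has an edge.
-/

open scoped Classical

open Finset Function

section Partitions

variable {α : Type*}

lemma Finset.exists_injective_fin_of_le_card {s : Finset α} {m : ℕ} (h : m ≤ #s) :
    ∃ f : Fin m → α, Injective f ∧ ∀ i, f i ∈ s :=
  ⟨fun i => s.equivFin.symm (Fin.castLE h i),
    Subtype.val_injective.comp (s.equivFin.symm.injective.comp (Fin.castLE_injective h)),
    fun i => (s.equivFin.symm (Fin.castLE h i)).2⟩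

lemma injective_of_pairwise_disjoint_nonempty {ι : Type*} {P : ι → Finset α}
    (hdisj : Pairwise (Disjoint on P)) (hne : ∀ i, (P i).Nonempty) : Injective P := by
  intro i j hij
  by_contra hne_ij
  obtain ⟨x, hx⟩ := hne i
  exact disjoint_left.mp (hdisj hne_ij) hx (hij ▸ hx)

variable [DecidableEq α]

lemma exists_pairwiseDisjoint_sup_eq_of_subset {ι : Type*} [Fintype ι] {E : Finset α}
    (P : ι → Finset α) (hPE : ∀ i, P i ⊆ E) (hdisj : Pairwise (Disjoint on P)) :
    ∃ π : Finset (Finset α), (π : Set (Finset α)).PairwiseDisjoint id ∧ π.sup id = E ∧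
      univ.image P ⊆ π := by
  set U := univ.sup P
  have hUE : U ⊆ E := Finset.sup_le fun i _ => hPE i
  have hrest : ∀ i, Disjoint (E \ U) (P i) := fun i =>
    disjoint_sdiff_self_left.mono_right (le_sup (f := P) (mem_univ i))
  refine ⟨univ.image P ∪ {E \ U}, ?_, ?_, subset_union_left⟩
  · rw [coe_union, coe_image, coe_univ, Set.image_univ, coe_singleton]
    refine Set.PairwiseDisjoint.union ?_ (Set.pairwiseDisjoint_singleton _ _) ?_
    · rintro _ ⟨i, rfl⟩ _ ⟨j, rfl⟩ hij
      exact hdisj fun h => hij (congrArg P h)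
    · rintro _ ⟨i, rfl⟩ _ rfl -
      exact (hrest i).symm
  · rw [sup_union, sup_singleton, sup_image, id_comp, id, sup_eq_union,
      union_sdiff_of_subset hUE]

end Partitions

lemma Finset.nonempty_of_isChain_of_head?_of_getLast? {V : Type*} {C : Finset (V × V)}
    {s t : V} (hst : s ≠ t) {l : List V} (hl : l.IsChain fun a b => (a, b) ∈ C)
    (hs : l.head? = some s) (ht : l.getLast? = some t) : C.Nonempty := by
  match l with
  | [] => simp at hs
  | [a] =>
    simp only [List.head?_cons, List.getLast?_singleton, Option.some.injEq] at hs ht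
    exact absurd (hs.symm.trans ht) hst
  | a :: b :: _ => exact ⟨(a, b), (List.isChain_cons_cons.mp hl).1⟩

theorem stmt_17_general {V : Type*} [DecidableEq V]
    (E : Finset (V × V)) (s t : V) (hst : s ≠ t)
    (HasPath : Finset (V × V) → Prop)
    (hHP : ∀ C : Finset (V × V), HasPath C ↔ ∃ l : List V,
      l.Chain' (fun a b => (a, b) ∈ C) ∧ l.head? = some s ∧ l.getLast? = some t) :
    ∀ m : ℕ,
      (∃ π : Finset (Finset (V × V)),
        (∀ C ∈ π, ∀ D ∈ π, C ≠ D → Disjoint C D) ∧ π.sup id = E ∧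
        m ≤ (π.filter (fun C => HasPath C)).card) ↔
      (∃ P : Fin m → Finset (V × V),
        (∀ i, P i ⊆ E ∧ HasPath (P i)) ∧
        ∀ i j : Fin m, i ≠ j → Disjoint (P i) (P j)) := by
  intro m
  constructor
  · rintro ⟨π, hπ, rfl, hm⟩
    obtain ⟨P, hinj, hmem⟩ := exists_injective_fin_of_le_card hm
    have hmem i := mem_filter.mp (hmem i)
    exact ⟨P, fun i => ⟨le_sup (f := id) (hmem i).1, (hmem i).2⟩,
      fun i j hij => hπ _ (hmem i).1 _ (hmem j).1 (hinj.ne hij)⟩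
  · rintro ⟨P, hP, hdisj⟩
    have hne i : (P i).Nonempty := by
      obtain ⟨l, hl, hs, ht⟩ := (hHP (P i)).mp (hP i).2
      exact nonempty_of_isChain_of_head?_of_getLast? hst hl hs ht
    obtain ⟨π, hπ, hsup, hPπ⟩ :=
      exists_pairwiseDisjoint_sup_eq_of_subset P (fun i => (hP i).1) hdisj
    refine ⟨π, fun C hC D hD => hπ hC hD, hsup, ?_⟩
    calc m = #(univ.image P) := by
          rw [card_image_of_injective _ (injective_of_pairwise_disjoint_nonempty hdisj hne),
            card_univ, Fintype.card_fin]
      _ ≤ #(π.filter fun C => HasPath C) := card_le_card fun C hC => by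
          obtain ⟨i, -, rfl⟩ := mem_image.mp hC
          exact mem_filter.mpr ⟨hPπ hC, (hP i).2⟩

/-- For edge path coalitional games, the maximum social welfare over coalition
structures equals the maximum number of pairwise edge-disjoint s–t paths:
for every `m`, some partition of `E` has at least `m` winning blocks iff there
exist `m` pairwise edge-disjoint s–t paths. -/
theorem stmt_17 {V : Type*} [Fintype V] [DecidableEq V]
    (E : Finset (V × V)) (s t : V) (hst : s ≠ t)
    (HasPath : Finset (V × V) → Prop)
    (hHP : ∀ C : Finset (V × V), HasPath C ↔ ∃ l : List V,
      l.Chain' (fun a b => (a, b) ∈ C) ∧ l.head? = some s ∧ l.getLast? = some t) :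
    ∀ m : ℕ,
      (∃ π : Finset (Finset (V × V)),
        (∀ C ∈ π, ∀ D ∈ π, C ≠ D → Disjoint C D) ∧ π.sup id = E ∧
        m ≤ (π.filter (fun C => HasPath C)).card) ↔
      (∃ P : Fin m → Finset (V × V),
        (∀ i, P i ⊆ E ∧ HasPath (P i)) ∧
        ∀ i j : Fin m, i ≠ j → Disjoint (P i) (P j)) :=
  stmt_17_general E s t hst HasPath hHP
end
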